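/- Suppose the instance satisfies (⋆). Then in every clique tree T of G_I, the pair AB is an edge of T, and each node Q_i (i ∈ {1, …, n}) is a leaf of T. -/

import Mathlib

open SimpleGraph

/-- The degree of a vertex in a graph, via `Set.ncard`. -/
noncomputable def deg {W : Type*} (T : SimpleGraph W) (w : W) : ℕ :=
  (T.neighborSet w).ncard

/-- The set of leaves (degree-one vertices) of a graph. -/
def leaves {W : Type*} (T : SimpleGraph W) : Set W :=
  {w | deg T w = 1}

/-- The number of leaves. -/
noncomputable def numLeaves {W : Type*} (T : SimpleGraph W) : ℕ :=
  (leaves T).ncard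

/-- The set of leaves of the subgraph of `T` induced by `s`
(nodes of `s` with exactly one neighbour inside `s`). -/
def subLeaves {W : Type*} (T : SimpleGraph W) (s : Set W) : Set W :=
  {w | w ∈ s ∧ (T.neighborSet w ∩ s).ncard = 1}

/-- The number of leaves of the subtree induced by `s`. -/
noncomputable def numSubLeaves {W : Type*} (T : SimpleGraph W) (s : Set W) : ℕ :=
  (subLeaves T s).ncard

/-- A tree model of a graph `G`: a finite host tree `T` together with nonempty
subtrees `sub u` such that distinct vertices are adjacent in `G` iff their
subtrees intersect. -/
structure TreeModel {V : Type*} (G : SimpleGraph V) where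
  W : Type
  finW : Finite W
  T : SimpleGraph W
  tree : T.IsTree
  sub : V → Set W
  sub_nonempty : ∀ u, (sub u).Nonempty
  sub_conn : ∀ u, (T.induce (sub u)).Connected
  adj_iff : ∀ u v, u ≠ v → (G.Adj u v ↔ (sub u ∩ sub v).Nonempty)

/-- The leafage of a chordal graph: the minimum number of host-tree leaves over
all tree models. -/
noncomputable def leafage {V : Type*} (G : SimpleGraph V) : ℕ :=
  sInf {n | ∃ M : TreeModel G, numLeaves M.T = n}

/-- The vertex leafage of a chordal graph: the least `k` such that `G` has a tree
model all of whose subtrees have at most `k` leaves. -/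
noncomputable def vleafage {V : Type*} (G : SimpleGraph V) : ℕ :=
  sInf {k | ∃ M : TreeModel G, ∀ u, numSubLeaves M.T (M.sub u) ≤ k}

/-- A maximal clique of `G`. -/
def IsMaxClique {V : Type*} (G : SimpleGraph V) (C : Set V) : Prop :=
  G.IsClique C ∧ ∀ D, G.IsClique D → C ⊆ D → D = C

/-- The type of maximal cliques of `G`. -/
abbrev MaxCliques {V : Type*} (G : SimpleGraph V) := {C : Set V // IsMaxClique G C}

/-- A clique tree of `G`: a tree whose nodes are exactly the maximal cliques of `G`,
such that every node on the path between nodes `C` and `C'` contains `C ∩ C'`. -/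
structure CliqueTree {V : Type*} (G : SimpleGraph V) where
  T : SimpleGraph (MaxCliques G)
  tree : T.IsTree
  path_cond : ∀ (C C' : MaxCliques G) (p : T.Walk C C'), p.IsPath →
    ∀ C'' ∈ p.support, C.1 ∩ C'.1 ⊆ C''.1

/-- The subtree (node set) assigned to a vertex `u` in the tree model defined by a
clique tree of `G`: the set of maximal cliques containing `u`. -/
def cliqueSub {V : Type*} (G : SimpleGraph V) (u : V) : Set (MaxCliques G) :=
  {C | u ∈ C.1}

/-- The set of nodes of degree at least 3. -/
def Hh {W : Type*} (T : SimpleGraph W) : Set W := {w | 3 ≤ deg T w}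

/-- The set of edges incident to a node of degree at least 3. -/
def Ee {W : Type*} (T : SimpleGraph W) : Set (Sym2 W) :=
  {e | e ∈ T.edgeSet ∧ ∃ w ∈ e, w ∈ Hh T}

/-- The vertex set of the graph `G_I`: variable vertices `v i`, clause vertices `y j`,
and two extra vertices `z 0`, `z 1`. -/
inductive GV (n m : ℕ) where
  | v : Fin n → GV n m
  | y : Fin m → GV n m
  | z : Fin 2 → GV n m
deriving DecidableEq

instance (n m : ℕ) : Finite (GV n m) :=
  Finite.of_surjective
    (fun x : (Fin n ⊕ Fin m ⊕ Fin 2) => match x with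
      | Sum.inl i => GV.v i
      | Sum.inr (Sum.inl j) => GV.y j
      | Sum.inr (Sum.inr t) => GV.z t)
    (by
      intro g
      cases g with
      | v i => exact ⟨Sum.inl i, rfl⟩
      | y j => exact ⟨Sum.inr (Sum.inl j), rfl⟩
      | z t => exact ⟨Sum.inr (Sum.inr t), rfl⟩)

/-- The split graph `G_I` of the reduction: `{y j}` is a clique, `{v i} ∪ {z t}` is an
independent set, `v i` is adjacent to `y j` iff `i ∈ C j`, and each `z t` is adjacent to
every `y j`. -/
def GI (n m : ℕ) (C : Fin m → Finset (Fin n)) : SimpleGraph (GV n m) :=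
  SimpleGraph.fromRel (fun a b =>
    match a, b with
    | GV.y _, GV.y _ => True
    | GV.v i, GV.y j => i ∈ C j
    | GV.z _, GV.y _ => True
    | _, _ => False)

/-- The maximal clique `A = {z_1, y_1, …, y_m}`. -/
def setA (n m : ℕ) : Set (GV n m) := {GV.z 0} ∪ {x | ∃ j, x = GV.y j}

/-- The maximal clique `B = {z_2, y_1, …, y_m}`. -/
def setB (n m : ℕ) : Set (GV n m) := {GV.z 1} ∪ {x | ∃ j, x = GV.y j}

/-- The maximal clique `Q_i = {v_i} ∪ {y_j : v_i ∈ C_j}`. -/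
def setQ (n m : ℕ) (C : Fin m → Finset (Fin n)) (i : Fin n) : Set (GV n m) :=
  {GV.v i} ∪ {x | ∃ j, x = GV.y j ∧ i ∈ C j}

/-!
The maximal cliques of `G_I` are `A`, `B` and the `Q_i`: they are the closed neighbourhoods of
`z_1`, `z_2` and `v_i`, and every maximal clique contains one of these vertices. Since `n ≥ 2`,
`(⋆)` says that no `Q_i` contains all the `y_j`, and that for `i' ≠ i` the `y`-part of `Q_{i'}`
is not contained in `Q_i`. So no node of a clique tree contains `A ∩ B` besides `A` and `B`, and
`AB` must be an edge. If `Q_i` had two neighbours, one of them, `e`, would be separated from `A`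
by `Q_i`, forcing `A ∩ e ⊆ Q_i`; this fails for `e = A`, `B` and `Q_{i'}` alike.
-/

section MaxClique

variable {V : Type*} {G : SimpleGraph V} {u : V} {D : Set V}

lemma subset_insert_neighborSet_of_isClique (hD : G.IsClique D) (hu : u ∈ D) :
    D ⊆ insert u (G.neighborSet u) := fun w hw => by
  rcases eq_or_ne w u with rfl | hne
  · exact Set.mem_insert _ _
  · exact Or.inr (hD hu hw hne.symm)

lemma isMaxClique_insert_neighborSet (h : G.IsClique (G.neighborSet u)) :
    IsMaxClique G (insert u (G.neighborSet u)) :=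
  ⟨isClique_insert.2 ⟨h, fun _ hb _ => hb⟩, fun _ hD hsub =>
    (subset_insert_neighborSet_of_isClique hD (hsub (Set.mem_insert _ _))).antisymm hsub⟩

lemma IsMaxClique.eq_insert_neighborSet (hD : IsMaxClique G D) (hu : u ∈ D)
    (h : G.IsClique (G.neighborSet u)) : D = insert u (G.neighborSet u) :=
  (hD.2 _ (isMaxClique_insert_neighborSet h).1
    (subset_insert_neighborSet_of_isClique hD.1 hu)).symm

end MaxClique

namespace SimpleGraph.IsTree

variable {W : Type*} {T : SimpleGraph W} {x d d' : W}

lemma mem_support_of_adj_of_adj (hT : T.IsTree) (hd : T.Adj x d) (hd' : T.Adj x d')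
    (hne : d ≠ d') {p : T.Walk d d'} (hp : p.IsPath) : x ∈ p.support := by
  have hq : (Walk.cons hd.symm (Walk.cons hd' Walk.nil)).IsPath := by
    simp [hd'.ne, hd.ne', hne]
  obtain rfl : p = _ :=
    congrArg Subtype.val ((hT.isAcyclic.subsingleton_path d d').elim ⟨p, hp⟩ ⟨_, hq⟩)
  simp

lemma exists_adj_isPath_mem_support (hT : T.IsTree) (hd : T.Adj x d) (hd' : T.Adj x d')
    (hne : d ≠ d') (a : W) :
    ∃ e, T.Adj x e ∧ ∃ p : T.Walk a e, p.IsPath ∧ x ∈ p.support := by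
  classical
  obtain ⟨p⟩ := hT.connected.preconnected a d
  obtain ⟨q⟩ := hT.connected.preconnected a d'
  by_cases hp : x ∈ p.bypass.support
  · exact ⟨d, hd, _, p.bypass_isPath, hp⟩
  refine ⟨d', hd', _, q.bypass_isPath, ?_⟩
  have hx := Walk.support_bypass_subset_support _ <|
    hT.mem_support_of_adj_of_adj hd hd' hne (p.bypass.reverse.append q.bypass).bypass_isPath
  rw [Walk.support_append, Walk.support_reverse, List.mem_append, List.mem_reverse] at hx
  exact List.mem_of_mem_tail (hx.resolve_left hp)

end SimpleGraph.IsTree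

namespace CliqueTree

variable {V : Type*} {G : SimpleGraph V} (CT : CliqueTree G)

lemma adj_of_forall_not_inter_subset {a b : MaxCliques G} (hab : a ≠ b)
    (h : ∀ x, x ≠ a → x ≠ b → ¬ a.1 ∩ b.1 ⊆ x.1) : CT.T.Adj a b := by
  classical
  obtain ⟨w⟩ := CT.tree.connected.preconnected a b
  obtain ⟨p, hp⟩ : ∃ p : CT.T.Walk a b, p.IsPath := ⟨_, w.bypass_isPath⟩
  cases p with
  | nil => exact absurd rfl hab
  | @cons _ x _ hax q =>
    cases q with
    | nil => exact hax
    | cons _ q' =>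
      have hsub := CT.path_cond a b _ hp x (by simp)
      rw [Walk.cons_isPath_iff, Walk.cons_isPath_iff] at hp
      refine absurd hsub (h x ?_ ?_)
      · rintro rfl; exact hp.2 (Walk.start_mem_support _)
      · rintro rfl; exact hp.1.2 q'.end_mem_support

lemma deg_eq_one_of_forall_not_inter_subset [Finite V] {x a : MaxCliques G} (hxa : x ≠ a)
    (h : ∀ e, CT.T.Adj x e → ¬ a.1 ∩ e.1 ⊆ x.1) : deg CT.T x = 1 := by
  have hfin : (CT.T.neighborSet x).Finite := Set.toFinite _
  have : Nontrivial (MaxCliques G) := ⟨x, a, hxa⟩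
  have hpos : 0 < deg CT.T x :=
    (Set.ncard_pos hfin).2 (CT.tree.connected.preconnected.exists_adj_of_nontrivial x)
  by_contra hne
  obtain ⟨d, d', hd, hd', hdd'⟩ :=
    (Set.one_lt_ncard_iff hfin).1 (by unfold deg at hpos hne; omega)
  obtain ⟨e, hxe, p, hp, hx⟩ := CT.tree.exists_adj_isPath_mem_support hd hd' hdd' a
  exact h e hxe (CT.path_cond a e p hp x hx)

end CliqueTree

namespace GI

variable {n m : ℕ} {C : Fin m → Finset (Fin n)} {i i' : Fin n} {j : Fin m} {t : Fin 2}

lemma adj_v_iff {w : GV n m} : (GI n m C).Adj (GV.v i) w ↔ ∃ j, w = GV.y j ∧ i ∈ C j := by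
  cases w <;> simp [GI]

lemma adj_z_iff {w : GV n m} : (GI n m C).Adj (GV.z t) w ↔ ∃ j, w = GV.y j := by
  cases w <;> simp [GI]

lemma isClique_of_forall_eq_y {s : Set (GV n m)} (hs : ∀ w ∈ s, ∃ j, w = GV.y j) :
    (GI n m C).IsClique s := by
  intro a ha b hb hab
  obtain ⟨j, rfl⟩ := hs a ha
  obtain ⟨j', rfl⟩ := hs b hb
  simpa [GI] using hab

lemma neighborSet_v : (GI n m C).neighborSet (GV.v i) = {w | ∃ j, w = GV.y j ∧ i ∈ C j} :=
  Set.ext fun _ => adj_v_iff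

lemma neighborSet_z : (GI n m C).neighborSet (GV.z t) = {w | ∃ j, w = GV.y j} :=
  Set.ext fun _ => adj_z_iff

lemma isClique_neighborSet_v : (GI n m C).IsClique ((GI n m C).neighborSet (GV.v i)) :=
  isClique_of_forall_eq_y fun _ hw => (adj_v_iff.1 hw).imp fun _ => And.left

lemma isClique_neighborSet_z : (GI n m C).IsClique ((GI n m C).neighborSet (GV.z t)) :=
  isClique_of_forall_eq_y fun _ hw => adj_z_iff.1 hw

lemma setA_eq : setA n m = insert (GV.z 0) ((GI n m C).neighborSet (GV.z 0)) := by
  rw [neighborSet_z, Set.insert_eq, setA]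

lemma setB_eq : setB n m = insert (GV.z 1) ((GI n m C).neighborSet (GV.z 1)) := by
  rw [neighborSet_z, Set.insert_eq, setB]

lemma setQ_eq : setQ n m C i = insert (GV.v i) ((GI n m C).neighborSet (GV.v i)) := by
  rw [neighborSet_v, Set.insert_eq, setQ]

lemma isMaxClique_setA : IsMaxClique (GI n m C) (setA n m) :=
  setA_eq (C := C) ▸ isMaxClique_insert_neighborSet isClique_neighborSet_z

lemma isMaxClique_cases {D : Set (GV n m)} (hD : IsMaxClique (GI n m C) D) :
    D = setA n m ∨ D = setB n m ∨ ∃ i, D = setQ n m C i := by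
  by_cases hv : ∃ i, GV.v i ∈ D
  · obtain ⟨i, hi⟩ := hv
    exact Or.inr <| Or.inr ⟨i, setQ_eq ▸ hD.eq_insert_neighborSet hi isClique_neighborSet_v⟩
  by_cases hz : GV.z 1 ∈ D
  · exact Or.inr <| Or.inl <|
      setB_eq (C := C) ▸ hD.eq_insert_neighborSet hz isClique_neighborSet_z
  refine Or.inl (hD.2 _ isMaxClique_setA.1 fun w hw => ?_).symm
  cases w with
  | v i => exact absurd ⟨i, hw⟩ hv
  | y j => exact Or.inr ⟨j, rfl⟩
  | z t =>
    fin_cases t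
    · exact Or.inl rfl
    · exact absurd hw hz

lemma y_mem_setQ_iff : GV.y j ∈ setQ n m C i ↔ i ∈ C j := by
  simp [setQ]

lemma setA_ne_setB : setA n m ≠ setB n m := fun h => by
  have : GV.z 1 ∈ setA n m := h ▸ Or.inl rfl
  simp [setA] at this

lemma setQ_ne_setA : setQ n m C i ≠ setA n m := fun h => by
  have : GV.v i ∈ setA n m := h ▸ Or.inl rfl
  simp [setA] at this

lemma not_setA_subset_setQ : ¬ setA n m ⊆ setQ n m C i := fun h => by
  simpa [setQ] using h (Or.inl rfl)

lemma not_setA_inter_setB_subset_setQ (hi : ∃ j, i ∉ C j) :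
    ¬ setA n m ∩ setB n m ⊆ setQ n m C i := fun h => by
  obtain ⟨j, hj⟩ := hi
  exact hj (y_mem_setQ_iff.1 (h ⟨Or.inr ⟨j, rfl⟩, Or.inr ⟨j, rfl⟩⟩))

lemma mem_of_setA_inter_setQ_subset (h : setA n m ∩ setQ n m C i' ⊆ setQ n m C i)
    (hj : i' ∈ C j) : i ∈ C j :=
  y_mem_setQ_iff.1 (h ⟨Or.inr ⟨j, rfl⟩, y_mem_setQ_iff.2 hj⟩)

end GI

lemma exists_notMem_of_forall_not_dominated {n m : ℕ} {C : Fin m → Finset (Fin n)}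
    (hn : 2 ≤ n) (hstar : ¬ ∃ i i' : Fin n, i ≠ i' ∧ ∀ j, i ∈ C j → i' ∈ C j)
    (i : Fin n) :
    ∃ j, i ∉ C j := by
  have : Nontrivial (Fin n) := Fin.nontrivial_iff_two_le.2 hn
  obtain ⟨i', hi'⟩ := exists_ne i
  by_contra! hall
  exact hstar ⟨i', i, hi', fun j _ => hall j⟩

theorem stmt8_general (k n m : ℕ) (hk : 3 ≤ k) (hn : k ≤ n)
    (C : Fin m → Finset (Fin n))
    (hstar : ¬ ∃ i i' : Fin n, i ≠ i' ∧ ∀ j, i ∈ C j → i' ∈ C j)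
    (CT : CliqueTree (GI n m C)) :
    (∀ D D' : MaxCliques (GI n m C), D.1 = setA n m → D'.1 = setB n m →
      CT.T.Adj D D') ∧
    (∀ (D : MaxCliques (GI n m C)) (i : Fin n), D.1 = setQ n m C i →
      deg CT.T D = 1) := by
  have hY : ∀ i, ¬ setA n m ∩ setB n m ⊆ setQ n m C i := fun i =>
    GI.not_setA_inter_setB_subset_setQ <|
      exists_notMem_of_forall_not_dominated (by omega) hstar i
  refine ⟨fun A B hA hB => ?_, fun Q i hQ => ?_⟩
  · refine CT.adj_of_forall_not_inter_subset
      (fun h => GI.setA_ne_setB (hA ▸ hB ▸ congrArg Subtype.val h)) fun x hxA hxB => ?_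
    rw [hA, hB]
    rcases GI.isMaxClique_cases x.2 with h | h | ⟨i, h⟩
    · exact absurd (Subtype.ext (h.trans hA.symm)) hxA
    · exact absurd (Subtype.ext (h.trans hB.symm)) hxB
    · exact h ▸ hY i
  · let A : MaxCliques (GI n m C) := ⟨setA n m, GI.isMaxClique_setA⟩
    refine CT.deg_eq_one_of_forall_not_inter_subset (a := A)
      (fun h => GI.setQ_ne_setA (hQ ▸ congrArg Subtype.val h)) fun e hQe => ?_
    rw [hQ]
    rcases GI.isMaxClique_cases e.2 with h | h | ⟨i', h⟩
    · rw [h, Set.inter_self]; exact GI.not_setA_subset_setQ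
    · rw [h]; exact hY i
    · rw [h]
      intro hsub
      have hi' : i' ≠ i := by rintro rfl; exact hQe.ne (Subtype.ext (hQ.trans h.symm))
      exact hstar ⟨i', i, hi', fun j => GI.mem_of_setA_inter_setQ_subset hsub⟩

/-- Suppose the instance satisfies `(⋆)`. Then in every clique tree `T` of `G_I`, the
pair `AB` is an edge of `T`, and each node `Q_i` is a leaf of `T`. -/
theorem stmt8 (k n m : ℕ) (hk : 3 ≤ k) (hn : k ≤ n) (hm : 1 ≤ m)
    (C : Fin m → Finset (Fin n)) (hC : ∀ j, (C j).card = k)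
    (hstar : ¬ ∃ i i' : Fin n, i ≠ i' ∧ ∀ j, i ∈ C j → i' ∈ C j)
    (CT : CliqueTree (GI n m C)) :
    (∀ D D' : MaxCliques (GI n m C), D.1 = setA n m → D'.1 = setB n m →
      CT.T.Adj D D') ∧
    (∀ (D : MaxCliques (GI n m C)) (i : Fin n), D.1 = setQ n m C i →
      deg CT.T D = 1) :=
  stmt8_general k n m hk hn C hstar CT
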